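/- Tilting Lemma: Let F, G be m-dimensional subspaces of ℝ^n with ‖Π_F − Π_G‖ ≤ χ for some χ ∈ [0,1), and let u : F → F⊥ be Lipschitz with u(0) = 0 and σ := χ(1 + Lip u) < 1. Then for every ρ > 0, the ball B_{(1−σ)ρ/√(1+(Lip u)²)}(0) ∩ G is contained in the orthogonal projection Π_G(graph u ∩ B_ρ(0)). -/

import Mathlib

/-!
A point `y ∈ G` is the `G`-projection of the graph point `x + u x` as soon as `x ∈ F` is a
fixed point of `x ↦ x + Π_F (y - Π_G (x + u x))`: at a fixed point `y - Π_G (x + u x)` lies in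
`G ∩ F⊥`, which is trivial because `‖Π_F - Π_G‖ < 1`. As `Π_F` is the identity on `F`, the
differences of this map are `Π_F (Π_F - Π_G)` applied to differences of graph points, so it
contracts with constant `‖Π_F - Π_G‖ (1 + Lip u) ≤ σ < 1`. Banach's fixed point theorem, started
at `0`, gives `‖x‖ ≤ ‖y‖ / (1 - σ)`, and since `u x ⊥ x`, `‖x + u x‖ ≤ √(1 + Lip u²) ‖x‖ < ρ`.
-/

open Metric Real Filter

noncomputable def pr {n : ℕ} (F : Submodule ℝ (EuclideanSpace ℝ (Fin n))) :
    EuclideanSpace ℝ (Fin n) →L[ℝ] EuclideanSpace ℝ (Fin n) :=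
  F.subtypeL.comp F.orthogonalProjectionOnto

noncomputable def graphSet {n : ℕ} (F : Submodule ℝ (EuclideanSpace ℝ (Fin n)))
    (u : F → Fᗮ) : Set (EuclideanSpace ℝ (Fin n)) :=
  Set.range fun z : F => (z : EuclideanSpace ℝ (Fin n)) + (u z : EuclideanSpace ℝ (Fin n))

noncomputable def cone {n : ℕ} (x : EuclideanSpace ℝ (Fin n)) (β : ℝ)
    (F : Submodule ℝ (EuclideanSpace ℝ (Fin n))) : Set (EuclideanSpace ℝ (Fin n)) :=
  {z | ‖pr Fᗮ (z - x)‖ ≤ β * ‖pr F (z - x)‖}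

section

open scoped NNReal InnerProductSpace

variable {𝕜 E : Type*} [RCLike 𝕜] [NormedAddCommGroup E] [InnerProductSpace 𝕜 E]

theorem norm_add_le_sqrt_one_add_sq_mul {x v : E} {L : ℝ} (h : ⟪x, v⟫_𝕜 = 0)
    (hv : ‖v‖ ≤ L * ‖x‖) : ‖x + v‖ ≤ √(1 + L ^ 2) * ‖x‖ := by
  have hpyth := norm_add_sq_eq_norm_sq_add_norm_sq_of_inner_eq_zero x v h
  have hv2 : ‖v‖ ^ 2 ≤ (L * ‖x‖) ^ 2 := pow_le_pow_left₀ (norm_nonneg v) hv 2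
  refine (sq_le_sq₀ (norm_nonneg _) (by positivity)).1 ?_
  rw [mul_pow, sq_sqrt (by positivity)]
  nlinarith

namespace Submodule

variable {F G : Submodule 𝕜 E} [F.HasOrthogonalProjection] [G.HasOrthogonalProjection]

theorem eq_zero_of_mem_of_starProjection_eq_zero
    (h : ‖F.starProjection - G.starProjection‖ < 1) {w : E} (hwG : w ∈ G)
    (hwF : F.starProjection w = 0) : w = 0 := by
  have hw : (F.starProjection - G.starProjection) w = -w := by
    simp [hwF, starProjection_eq_self_iff.2 hwG]
  by_contra hne
  have := (F.starProjection - G.starProjection).le_opNorm w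
  rw [hw, norm_neg] at this
  nlinarith [norm_pos_iff.2 hne]

variable (F G) in
noncomputable def tiltMap (u : F → Fᗮ) (y : E) (x : F) : F :=
  x + F.orthogonalProjectionOnto (y - G.starProjection (x + u x))

theorem tiltMap_sub (u : F → Fᗮ) (y : E) (x x' : F) :
    tiltMap F G u y x - tiltMap F G u y x' = F.orthogonalProjectionOnto
      ((F.starProjection - G.starProjection) (((x : E) + u x) - (x' + u x'))) := by
  simp only [tiltMap, sub_apply, map_sub, map_add, starProjection_apply,
    orthogonalProjectionOnto_mem_subspace_eq_self,
    orthogonalProjectionOnto_apply_of_mem_orthogonal (u x).2,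
    orthogonalProjectionOnto_apply_of_mem_orthogonal (u x').2]
  abel

theorem lipschitzWith_tiltMap {K : ℝ≥0} {u : F → Fᗮ} (hu : LipschitzWith K u) (y : E) :
    LipschitzWith (‖F.starProjection - G.starProjection‖₊ * (1 + K)) (tiltMap F G u y) := by
  refine LipschitzWith.of_dist_le_mul fun x x' => ?_
  have hgraph : ‖((x : E) + u x) - (x' + u x')‖ ≤ (1 + K) * ‖x - x'‖ := calc
    _ = ‖((x - x' : F) : E) + (u x - u x' : Fᗮ)‖ := by congr 1; push_cast; abel
    _ ≤ ‖x - x'‖ + ‖u x - u x'‖ := norm_add_le _ _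
    _ ≤ (1 + K) * ‖x - x'‖ := by linarith [hu.norm_sub_le x x']
  rw [dist_eq_norm, dist_eq_norm, tiltMap_sub]
  calc _ ≤ ‖(F.starProjection - G.starProjection) (((x : E) + u x) - (x' + u x'))‖ :=
        norm_orthogonalProjectionOnto_apply_le F _
    _ ≤ ‖F.starProjection - G.starProjection‖ * ((1 + K) * ‖x - x'‖) :=
        (ContinuousLinearMap.le_opNorm _ _).trans (by gcongr)
    _ = _ := by push_cast; ring

theorem exists_starProjection_graph_eq [CompleteSpace F] {K : ℝ≥0} {u : F → Fᗮ}
    (hu : LipschitzWith K u) (hu0 : u 0 = 0)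
    (hσ : ‖F.starProjection - G.starProjection‖ * (1 + K) < 1) {y : E} (hy : y ∈ G) :
    ∃ x : F, G.starProjection (x + u x) = y ∧
      ‖x‖ ≤ ‖y‖ / (1 - ‖F.starProjection - G.starProjection‖ * (1 + K)) := by
  have hc : ContractingWith (‖F.starProjection - G.starProjection‖₊ * (1 + K))
      (tiltMap F G u y) := ⟨by exact_mod_cast hσ, lipschitzWith_tiltMap hu y⟩
  set x := ContractingWith.fixedPoint _ hc
  refine ⟨x, ?_, ?_⟩
  · have hfix : F.orthogonalProjectionOnto (y - G.starProjection (x + u x)) = 0 :=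
      add_eq_left.1 hc.fixedPoint_isFixedPt
    have hδ : ‖F.starProjection - G.starProjection‖ < 1 := by
      nlinarith [norm_nonneg (F.starProjection - G.starProjection), K.2]
    refine (sub_eq_zero.1 (eq_zero_of_mem_of_starProjection_eq_zero hδ
      (G.sub_mem hy (G.starProjection_apply_mem _)) ?_)).symm
    rw [starProjection_apply, hfix, ZeroMemClass.coe_zero]
  · have hx := hc.dist_fixedPoint_le 0
    rw [dist_zero_left, dist_zero_left] at hx
    refine hx.trans (div_le_div_of_nonneg_right ?_ (sub_pos.2 hσ).le)
    simpa [tiltMap, hu0] using norm_orthogonalProjectionOnto_apply_le F y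

end Submodule
end

theorem tilting_lemma_general {n : ℕ}
    (F G : Submodule ℝ (EuclideanSpace ℝ (Fin n)))
    (χ L : ℝ) (hL : 0 ≤ L)
    (hang : ‖pr F - pr G‖ ≤ χ)
    (u : F → Fᗮ) (hu0 : u 0 = 0)
    (hlip : ∀ a b : F, ‖u a - u b‖ ≤ L * ‖a - b‖)
    (hσ : χ * (1 + L) < 1) :
    ∀ ρ > (0 : ℝ),
      ball (0 : EuclideanSpace ℝ (Fin n)) ((1 - χ * (1 + L)) * ρ / Real.sqrt (1 + L ^ 2)) ∩
          (G : Set (EuclideanSpace ℝ (Fin n))) ⊆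
        pr G '' (graphSet F u ∩ ball 0 ρ) := by
  rintro ρ - y ⟨hyρ, hyG⟩
  change ‖F.starProjection - G.starProjection‖ ≤ χ at hang
  have hu : LipschitzWith L.toNNReal u :=
    LipschitzWith.of_dist_le' fun a b => by simpa only [dist_eq_norm] using hlip a b
  have hK : (L.toNNReal : ℝ) = L := Real.coe_toNNReal L hL
  have hδ : ‖F.starProjection - G.starProjection‖ * (1 + L) ≤ χ * (1 + L) := by gcongr
  obtain ⟨x, hxy, hx⟩ := Submodule.exists_starProjection_graph_eq hu hu0
    (by rw [hK]; linarith) hyG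
  rw [hK] at hx
  refine ⟨x + u x, ⟨⟨x, rfl⟩, ?_⟩, hxy⟩
  rw [mem_ball_zero_iff] at hyρ ⊢
  have h1σ : 0 < 1 - χ * (1 + L) := sub_pos.2 hσ
  calc ‖(x : EuclideanSpace ℝ (Fin n)) + u x‖ ≤ √(1 + L ^ 2) * ‖x‖ :=
        norm_add_le_sqrt_one_add_sq_mul (Submodule.inner_right_of_mem_orthogonal x.2 (u x).2)
          (by simpa [hu0] using hlip x 0)
    _ ≤ √(1 + L ^ 2) * (‖y‖ / (1 - χ * (1 + L))) := by
        gcongr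
        exact hx.trans (div_le_div_of_nonneg_left (norm_nonneg y) h1σ (by linarith))
    _ < √(1 + L ^ 2) * ((1 - χ * (1 + L)) * ρ / √(1 + L ^ 2) / (1 - χ * (1 + L))) := by
        gcongr
    _ = ρ := by field_simp

/-- Tilting Lemma: if `∠(F,G) ≤ χ < 1`, `u : F → F⊥` is `L`-Lipschitz with
`u(0) = 0` and `σ := χ(1+L) < 1`, then for every `ρ > 0`,
`B_{(1-σ)ρ/√(1+L²)}(0) ∩ G ⊆ Π_G(graph u ∩ B_ρ(0))`. -/
theorem tilting_lemma {n m : ℕ}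
    (F G : Submodule ℝ (EuclideanSpace ℝ (Fin n)))
    (hF : Module.finrank ℝ F = m) (hG : Module.finrank ℝ G = m)
    (χ L : ℝ) (hχ0 : 0 ≤ χ) (hχ1 : χ < 1) (hL : 0 ≤ L)
    (hang : ‖pr F - pr G‖ ≤ χ)
    (u : F → Fᗮ) (hu0 : u 0 = 0)
    (hlip : ∀ a b : F, ‖u a - u b‖ ≤ L * ‖a - b‖)
    (hσ : χ * (1 + L) < 1) :
    ∀ ρ > (0 : ℝ),
      ball (0 : EuclideanSpace ℝ (Fin n)) ((1 - χ * (1 + L)) * ρ / Real.sqrt (1 + L ^ 2)) ∩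
          (G : Set (EuclideanSpace ℝ (Fin n))) ⊆
        pr G '' (graphSet F u ∩ ball 0 ρ) :=
  tilting_lemma_general F G χ L hL hang u hu0 hlip hσ
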